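/- Determinism of top-level closed type family reduction under pairwise compatibility: if every pair of equations of a type family is compatible (either their left-hand sides are apart, or any common instance yields equal right-hand sides), then whenever an application F τ̄ reduces at top level by equation i to σ₁ and by equation j to σ₂, we have σ₁ = σ₂. -/

import Mathlib

inductive Tm where
  | var : ℕ → Tm
  | app : ℕ → List Tm → Tm
deriving Repr

def Tm.subst (θ : ℕ → Tm) : Tm → Tm
  | .var n => θ n
  | .app f args => .app f (args.attach.map fun x => Tm.subst θ x.1)
decreasing_by
  have := List.sizeOf_lt_of_mem x.2
  simp only [Tm.app.sizeOf_spec]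
  omega

inductive Tm.FreeIn : ℕ → Tm → Prop
  | var (n : ℕ) : Tm.FreeIn n (.var n)
  | app {n f t} {args : List Tm} : t ∈ args → Tm.FreeIn n t → Tm.FreeIn n (.app f args)

/-- `θ'` unifies the two lists of terms. -/
def Unifies (θ' : ℕ → Tm) (σs τs : List Tm) : Prop :=
  σs.map (Tm.subst θ') = τs.map (Tm.subst θ')

/-- A type family equation ∀ᾱ. F σ̄ ∼ σ₀, with left-hand side argument list
`lhs` and right-hand side `rhs`. -/
structure Equation where
  lhs : List Tm
  rhs : Tm

/-- Free variables of the right-hand side occur in the left-hand side. -/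
def Equation.WellScoped (E : Equation) : Prop :=
  ∀ n, Tm.FreeIn n E.rhs → ∃ t ∈ E.lhs, Tm.FreeIn n t

/-- Each variable occurs at most once in the left-hand side (linearity). -/
def Equation.Linear (E : Equation) : Prop :=
  ∀ n, ∀ i j : Fin E.lhs.length,
    Tm.FreeIn n (E.lhs.get i) → Tm.FreeIn n (E.lhs.get j) → i = j

/-- Two equations are compatible: their left-hand sides are apart, or any
common instance yields equal right-hand sides. -/
def Compatible (E₁ E₂ : Equation) : Prop :=
  (¬ ∃ θ, Unifies θ E₁.lhs E₂.lhs) ∨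
  (∀ θ, Unifies θ E₁.lhs E₂.lhs → Tm.subst θ E₁.rhs = Tm.subst θ E₂.rhs)

/-- `F τ̄` reduces at top level by equation `E` to `σ`: the arguments are an
instance of the left-hand side and `σ` is the corresponding instance of the
right-hand side. -/
def ReducesTo (E : Equation) (τs : List Tm) (σ : Tm) : Prop :=
  ∃ θ : ℕ → Tm, τs = E.lhs.map (Tm.subst θ) ∧ σ = Tm.subst θ E.rhs

/-! If both reductions happen by the same equation, the right-hand side only depends on the
instantiation of the left-hand side's variables, which the arguments determine. Otherwise the
two variable sets are disjoint, so the two instantiations glue to a single unifier of the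
left-hand sides, and compatibility identifies the right-hand sides. -/

namespace Tm

theorem subst_var (θ : ℕ → Tm) (n : ℕ) : (Tm.var n).subst θ = θ n := by
  rw [Tm.subst]

theorem subst_app (θ : ℕ → Tm) (f : ℕ) (args : List Tm) :
    (Tm.app f args).subst θ = .app f (args.map (Tm.subst θ)) := by
  rw [Tm.subst, List.map_attach_eq_pmap, List.pmap_eq_map]

theorem subst_congr : ∀ (t : Tm) {θ₁ θ₂ : ℕ → Tm},
    (∀ n, FreeIn n t → θ₁ n = θ₂ n) → t.subst θ₁ = t.subst θ₂
  | .var n, _, _, h => by rw [subst_var, subst_var, h n (.var n)]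
  | .app f args, _, _, h => by
    rw [subst_app, subst_app, List.map_congr_left fun t ht =>
      have := List.sizeOf_lt_of_mem ht
      subst_congr t fun n hn => h n (.app ht hn)]
termination_by t => sizeOf t
decreasing_by simp only [Tm.app.sizeOf_spec]; omega

theorem eq_of_subst_eq {n : ℕ} {t : Tm} (hn : FreeIn n t) {θ₁ θ₂ : ℕ → Tm}
    (h : t.subst θ₁ = t.subst θ₂) : θ₁ n = θ₂ n := by
  induction hn with
  | var => rwa [subst_var, subst_var] at h
  | app ht _ ih =>
    rw [subst_app, subst_app, app.injEq] at h
    exact ih (List.map_eq_map_iff.mp h.2 _ ht)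

theorem map_subst_congr {ts : List Tm} {θ₁ θ₂ : ℕ → Tm}
    (h : ∀ n, (∃ t ∈ ts, FreeIn n t) → θ₁ n = θ₂ n) :
    ts.map (subst θ₁) = ts.map (subst θ₂) :=
  List.map_congr_left fun t ht => subst_congr t fun n hn => h n ⟨t, ht, hn⟩

theorem eq_of_map_subst_eq {ts : List Tm} {θ₁ θ₂ : ℕ → Tm}
    (h : ts.map (subst θ₁) = ts.map (subst θ₂)) :
    ∀ n, (∃ t ∈ ts, FreeIn n t) → θ₁ n = θ₂ n
  | _, ⟨t, ht, hn⟩ => eq_of_subst_eq hn (List.map_eq_map_iff.mp h t ht)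

end Tm

theorem Equation.WellScoped.subst_rhs_congr {E : Equation} (hE : E.WellScoped)
    {θ₁ θ₂ : ℕ → Tm} (h : ∀ n, (∃ t ∈ E.lhs, Tm.FreeIn n t) → θ₁ n = θ₂ n) :
    E.rhs.subst θ₁ = E.rhs.subst θ₂ :=
  Tm.subst_congr _ fun n hn => h n (hE n hn)

theorem Compatible.subst_rhs_eq {E₁ E₂ : Equation} (hc : Compatible E₁ E₂) {θ : ℕ → Tm}
    (hθ : Unifies θ E₁.lhs E₂.lhs) : E₁.rhs.subst θ = E₂.rhs.subst θ :=
  hc.elim (fun hapart => absurd ⟨θ, hθ⟩ hapart) (· θ hθ)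

theorem ReducesTo.eq {E : Equation} (hE : E.WellScoped) {τs : List Tm} {σ₁ σ₂ : Tm}
    (h₁ : ReducesTo E τs σ₁) (h₂ : ReducesTo E τs σ₂) : σ₁ = σ₂ := by
  obtain ⟨θ₁, hτ₁, rfl⟩ := h₁
  obtain ⟨θ₂, hτ₂, rfl⟩ := h₂
  exact hE.subst_rhs_congr (Tm.eq_of_map_subst_eq (hτ₁.symm.trans hτ₂))

theorem ReducesTo.eq_of_compatible {E₁ E₂ : Equation} (hE₁ : E₁.WellScoped)
    (hE₂ : E₂.WellScoped)
    (hdisj : ∀ n, (∃ t ∈ E₁.lhs, Tm.FreeIn n t) → ¬ ∃ t ∈ E₂.lhs, Tm.FreeIn n t)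
    (hc : Compatible E₁ E₂) {τs : List Tm} {σ₁ σ₂ : Tm}
    (h₁ : ReducesTo E₁ τs σ₁) (h₂ : ReducesTo E₂ τs σ₂) : σ₁ = σ₂ := by
  classical
  obtain ⟨θ₁, hτ₁, rfl⟩ := h₁
  obtain ⟨θ₂, hτ₂, rfl⟩ := h₂
  let θ : ℕ → Tm := fun n => if ∃ t ∈ E₁.lhs, Tm.FreeIn n t then θ₁ n else θ₂ n
  have hθ₁ : ∀ n, (∃ t ∈ E₁.lhs, Tm.FreeIn n t) → θ n = θ₁ n := fun n hn => if_pos hn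
  have hθ₂ : ∀ n, (∃ t ∈ E₂.lhs, Tm.FreeIn n t) → θ n = θ₂ n := fun n hn =>
    if_neg fun hn₁ => hdisj n hn₁ hn
  have hunif : Unifies θ E₁.lhs E₂.lhs := by
    rw [Unifies, Tm.map_subst_congr hθ₁, Tm.map_subst_congr hθ₂, ← hτ₁, ← hτ₂]
  calc E₁.rhs.subst θ₁ = E₁.rhs.subst θ := (hE₁.subst_rhs_congr hθ₁).symm
    _ = E₂.rhs.subst θ := hc.subst_rhs_eq hunif
    _ = E₂.rhs.subst θ₂ := hE₂.subst_rhs_congr hθ₂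

theorem closed_family_reduction_deterministic_general (Es : List Equation)
    (hws : ∀ E ∈ Es, E.WellScoped)
    (hvars : ∀ i j : Fin Es.length, i ≠ j → ∀ n,
      (∃ t ∈ (Es.get i).lhs, Tm.FreeIn n t) →
      ¬ ∃ t ∈ (Es.get j).lhs, Tm.FreeIn n t)
    (hcompat : ∀ E₁ ∈ Es, ∀ E₂ ∈ Es, Compatible E₁ E₂)
    (i j : Fin Es.length) (τs : List Tm) (σ₁ σ₂ : Tm)
    (h₁ : ReducesTo (Es.get i) τs σ₁)
    (h₂ : ReducesTo (Es.get j) τs σ₂) :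
    σ₁ = σ₂ := by
  by_cases hij : i = j
  · subst hij
    exact h₁.eq (hws _ (Es.get_mem i)) h₂
  · exact h₁.eq_of_compatible (hws _ (Es.get_mem i)) (hws _ (Es.get_mem j)) (hvars i j hij)
      (hcompat _ (Es.get_mem i) _ (Es.get_mem j)) h₂

/-- Determinism of top-level closed type family reduction under pairwise
compatibility: if all equations of the family are well-scoped, linear, use
disjoint variables, and are pairwise compatible, then reducing F τ̄ by
equation i and by equation j yields the same result. -/
theorem closed_family_reduction_deterministic (Es : List Equation)
    (hws : ∀ E ∈ Es, E.WellScoped)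
    (hlin : ∀ E ∈ Es, E.Linear)
    (hvars : ∀ i j : Fin Es.length, i ≠ j → ∀ n,
      (∃ t ∈ (Es.get i).lhs, Tm.FreeIn n t) →
      ¬ ∃ t ∈ (Es.get j).lhs, Tm.FreeIn n t)
    (hcompat : ∀ E₁ ∈ Es, ∀ E₂ ∈ Es, Compatible E₁ E₂)
    (i j : Fin Es.length) (τs : List Tm) (σ₁ σ₂ : Tm)
    (h₁ : ReducesTo (Es.get i) τs σ₁)
    (h₂ : ReducesTo (Es.get j) τs σ₂) :
    σ₁ = σ₂ :=
  closed_family_reduction_deterministic_general Es hws hvars hcompat i j τs σ₁ σ₂ h₁ h₂
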